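/- arXiv:2211.06019 — 4 statements merged into one kernel-verified Lean document; each statement's English description precedes it below -/
import Mathlib

section
/- For every integer N ≥ 2, ∑_{p | N} (log p)/(p(p² − 1)) < 0.186, where the sum is over primes p dividing N. -/
open Complex Finset

noncomputable section

/-- The set `C_N` of integer matrices `[[a,b],[0,d]]` with `ad = N`, `a ≥ 1`,
`0 ≤ b ≤ d-1` and `gcd(a,b,d) = 1`, encoded as triples `(a, b, d)` of naturals. -/
def CN (N : ℕ) : Finset (ℕ × ℕ × ℕ) :=
  ((Finset.range (N + 1)) ×ˢ (Finset.range (N + 1)) ×ˢ (Finset.range (N + 1))).filter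
    (fun g => g.1 * g.2.2 = N ∧ 1 ≤ g.1 ∧ g.2.1 < g.2.2 ∧
      Nat.gcd g.1 (Nat.gcd g.2.1 g.2.2) = 1)

/-- `ψ(N) = N ∏_{p ∣ N} (1 + 1/p)`. -/
def psi (N : ℕ) : ℝ := N * ∏ p ∈ N.primeFactors, (1 + 1 / (p : ℝ))

/-- `λ_N = ∑_{p^n ∥ N} ((p^n - 1)/(p^(n-1) (p² - 1))) log p`. -/
def lam (N : ℕ) : ℝ :=
  ∑ p ∈ N.primeFactors,
    (((p : ℝ) ^ (N.factorization p) - 1) /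
      ((p : ℝ) ^ (N.factorization p - 1) * ((p : ℝ) ^ 2 - 1))) * Real.log p

/-- `κ_N = ∑_{p ∣ N} (log p)/p`. -/
def kap (N : ℕ) : ℝ := ∑ p ∈ N.primeFactors, Real.log p / p

/-- `q = e^{2πiz}`. -/
def qpar (z : ℂ) : ℂ := Complex.exp (2 * Real.pi * Complex.I * z)

/-- The modular discriminant `Δ(z) = q ∏_{n ≥ 1} (1 - qⁿ)^24`. -/
def Delta (z : ℂ) : ℂ := qpar z * ∏' n : ℕ, (1 - qpar z ^ (n + 1)) ^ 24

/-- The normalized weight-4 Eisenstein series `E₄(z) = 1 + 240 ∑_{n ≥ 1} σ₃(n) qⁿ`. -/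
def E4 (z : ℂ) : ℂ :=
  1 + 240 * ∑' n : ℕ, (∑ d ∈ (n + 1).divisors, (d : ℂ) ^ 3) * qpar z ^ (n + 1)

/-- The modular `j`-invariant, `j = E₄³/Δ`. -/
def jinv (z : ℂ) : ℂ := E4 z ^ 3 / Delta z

/-- `τ_γ = (aτ + b)/d` for `γ = (a,b,d)`. -/
def tauG (g : ℕ × ℕ × ℕ) (z : ℂ) : ℂ := ((g.1 : ℂ) * z + (g.2.1 : ℂ)) / (g.2.2 : ℂ)

/-- `S_N(τ) = ∑_{γ ∈ C_N} log max(1, |j(τ_γ)|)`. -/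
def SN (N : ℕ) (z : ℂ) : ℝ :=
  ∑ g ∈ CN N, Real.log (max 1 ‖jinv (tauG g z)‖)

/-- The standard fundamental domain
`F = {τ : Im τ > 0, |τ| ≥ 1, -1/2 < Re τ ≤ 1/2, and Re τ ≥ 0 if |τ| = 1}`. -/
def Fdom : Set ℂ :=
  {z | 0 < z.im ∧ 1 ≤ ‖z‖ ∧ -(1/2) < z.re ∧ z.re ≤ 1/2 ∧
    (‖z‖ = 1 → 0 ≤ z.re)}

/-- Action of `SL₂(ℤ)` on the upper half-plane by fractional linear transformations. -/
def mobius (g : Matrix.SpecialLinearGroup (Fin 2) ℤ) (z : ℂ) : ℂ :=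
  (((g : Matrix (Fin 2) (Fin 2) ℤ) 0 0 : ℂ) * z + ((g : Matrix (Fin 2) (Fin 2) ℤ) 0 1 : ℂ)) /
    (((g : Matrix (Fin 2) (Fin 2) ℤ) 1 0 : ℂ) * z + ((g : Matrix (Fin 2) (Fin 2) ℤ) 1 1 : ℂ))

/-- Height of an integer polynomial in two variables:
`h(P) = log max |coefficients|`. -/
def hPol (P : MvPolynomial (Fin 2) ℤ) : ℝ :=
  Real.log ((P.support.sup fun m => (MvPolynomial.coeff m P).natAbs : ℕ) : ℝ)

/-- `P = Φ_N`, the classical modular polynomial: for every `τ` in the upper half-plane,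
`P(X, j(τ)) = ∏_{γ ∈ C_N} (X - j(τ_γ))`. -/
def IsModPoly (N : ℕ) (P : MvPolynomial (Fin 2) ℤ) : Prop :=
  ∀ z : ℂ, 0 < z.im →
    MvPolynomial.aeval
      (fun i : Fin 2 => if i = 0 then (Polynomial.X : Polynomial ℂ)
        else Polynomial.C (jinv z)) P
      = ∏ g ∈ CN N, (Polynomial.X - Polynomial.C (jinv (tauG g z)))

/-!
Split the primes at 100. Below 100, `p ^ 128 ≤ 2 ^ ⌈128 log₂ p⌉` bounds each `log p` by a rational
multiple of `log 2`, accurate enough that the 25 terms sum to at most `0.18544` (the true value is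
`0.18535…`). From 100 on, the tangent line of `log` at 100 gives `log n ≤ 0.046 (n + 1)`, so the
`n`-th term is at most `0.046 / ((n - 1) n)`, and these telescope to less than `0.046 / 99`.
-/

theorem Real.log_natCast_le_clog_div_mul_log {b : ℕ} (hb : 1 < b) (n : ℕ) {k : ℕ} (hk : 0 < k) :
    Real.log n ≤ Nat.clog b (n ^ k) / k * Real.log b := by
  rcases Nat.eq_zero_or_pos n with rfl | hn
  · simp only [CharP.cast_eq_zero, Real.log_zero]
    have := Real.log_natCast_nonneg b
    positivity
  have hpow : ((n ^ k : ℕ) : ℝ) ≤ ((b ^ Nat.clog b (n ^ k) : ℕ) : ℝ) := by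
    exact_mod_cast Nat.le_pow_clog hb _
  have hlog := Real.log_le_log (by positivity) hpow
  push_cast at hlog
  rw [Real.log_pow, Real.log_pow] at hlog
  rw [div_mul_eq_mul_div, le_div_iff₀ (by positivity)]
  linarith

theorem natCast_mul_sq_sub_one_nonneg (n : ℕ) : 0 ≤ (n : ℝ) * ((n : ℝ) ^ 2 - 1) := by
  rcases Nat.eq_zero_or_pos n with rfl | hn
  · simp
  have : (1 : ℝ) ≤ n := by exact_mod_cast hn
  exact mul_nonneg (by positivity) (by nlinarith)

theorem log_div_natCast_mul_sq_sub_one_nonneg (n : ℕ) :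
    0 ≤ Real.log n / (n * ((n : ℝ) ^ 2 - 1)) :=
  div_nonneg (Real.log_natCast_nonneg n) (natCast_mul_sq_sub_one_nonneg n)

theorem sum_primesBelow_hundred_log_div_mul_sq_sub_one_le :
    ∑ p ∈ Nat.primesBelow 100, Real.log p / (p * ((p : ℝ) ^ 2 - 1)) ≤ 0.18544 := by
  calc ∑ p ∈ Nat.primesBelow 100, Real.log p / (p * ((p : ℝ) ^ 2 - 1))
      ≤ ∑ p ∈ Nat.primesBelow 100,
          Nat.clog 2 (p ^ 128) / 128 * Real.log 2 / (p * ((p : ℝ) ^ 2 - 1)) := by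
        refine sum_le_sum fun p _ => div_le_div_of_nonneg_right ?_ ?_
        · exact_mod_cast Real.log_natCast_le_clog_div_mul_log one_lt_two p (by norm_num : 0 < 128)
        · exact natCast_mul_sq_sub_one_nonneg p
    _ ≤ 0.18544 := by
        rw [show Nat.primesBelow 100 =
          {2, 3, 5, 7, 11, 13, 17, 19, 23, 29, 31, 37, 41, 43, 47, 53, 59, 61, 67, 71, 73, 79, 83,
            89, 97} by decide]
        norm_num [sum_insert]
        linarith [Real.log_two_lt_d9]

theorem log_le_of_hundred_le {x : ℝ} (hx : 100 ≤ x) : Real.log x ≤ 0.046 * (x + 1) := by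
  have hlog100 : Real.log 100 ≤ 4.61 := by
    have := Real.log_natCast_le_clog_div_mul_log one_lt_two 100 (by norm_num : 0 < 128)
    norm_num at this
    linarith [Real.log_two_lt_d9]
  have htangent := Real.log_le_sub_one_of_pos (x := x / 100) (by positivity)
  rw [Real.log_div (by positivity) (by norm_num)] at htangent
  linarith

theorem log_div_mul_sq_sub_one_le_of_hundred_le {x : ℝ} (hx : 100 ≤ x) :
    Real.log x / (x * (x ^ 2 - 1)) ≤ 0.046 * (1 / (x - 1) - 1 / x) := by
  have hden : 0 < x * (x ^ 2 - 1) := by nlinarith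
  have hfactor : (1 / (x - 1) - 1 / x) * (x * (x ^ 2 - 1)) = x + 1 := by
    field_simp [show x - 1 ≠ 0 by linarith, show x ≠ 0 by linarith]
    ring
  rw [div_le_iff₀ hden, mul_assoc, hfactor]
  exact log_le_of_hundred_le hx

theorem sum_one_div_sub_one_sub_one_div_le {a : ℕ} (ha : 2 ≤ a) {T : Finset ℕ}
    (hT : ∀ n ∈ T, a ≤ n) : ∑ n ∈ T, (1 / ((n : ℝ) - 1) - 1 / n) ≤ 1 / ((a : ℝ) - 1) := by
  set M := T.sup id + a
  have hsub : T ⊆ Ico a M := fun n hn =>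
    mem_Ico.2 ⟨hT n hn, (le_sup (f := id) hn).trans_lt (by omega)⟩
  have hnonneg : ∀ n ∈ Ico a M, n ∉ T → 0 ≤ 1 / ((n : ℝ) - 1) - 1 / n := by
    intro n hn _
    have : (2 : ℝ) ≤ n := by exact_mod_cast ha.trans (mem_Ico.1 hn).1
    exact sub_nonneg.2 (one_div_le_one_div_of_le (by linarith) (by linarith))
  have htelescope : ∑ n ∈ Ico a M, (1 / ((n : ℝ) - 1) - 1 / n)
      = -(1 / ((M : ℝ) - 1)) - -(1 / ((a : ℝ) - 1)) := by
    rw [← sum_Ico_sub (fun i : ℕ => -(1 / ((i : ℝ) - 1))) (by omega)]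
    refine sum_congr rfl fun n _ => ?_
    push_cast
    ring
  have hM : (2 : ℝ) ≤ M := by exact_mod_cast (show 2 ≤ M by omega)
  have : 0 ≤ 1 / ((M : ℝ) - 1) := one_div_nonneg.2 (by linarith)
  calc ∑ n ∈ T, (1 / ((n : ℝ) - 1) - 1 / n)
      ≤ ∑ n ∈ Ico a M, (1 / ((n : ℝ) - 1) - 1 / n) := sum_le_sum_of_subset_of_nonneg hsub hnonneg
    _ ≤ 1 / ((a : ℝ) - 1) := by linarith

theorem sum_log_div_mul_sq_sub_one_le_of_hundred_le {T : Finset ℕ} (hT : ∀ n ∈ T, 100 ≤ n) :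
    ∑ n ∈ T, Real.log n / (n * ((n : ℝ) ^ 2 - 1)) ≤ 0.046 / 99 :=
  calc ∑ n ∈ T, Real.log n / (n * ((n : ℝ) ^ 2 - 1))
      ≤ ∑ n ∈ T, 0.046 * (1 / ((n : ℝ) - 1) - 1 / n) :=
        sum_le_sum fun n hn => log_div_mul_sq_sub_one_le_of_hundred_le (by exact_mod_cast hT n hn)
    _ = 0.046 * ∑ n ∈ T, (1 / ((n : ℝ) - 1) - 1 / n) := (mul_sum _ _ _).symm
    _ ≤ 0.046 * (1 / (((100 : ℕ) : ℝ) - 1)) := by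
        gcongr
        exact sum_one_div_sub_one_sub_one_div_le (by norm_num) hT
    _ = 0.046 / 99 := by norm_num

theorem sum_log_div_mul_sq_sub_one_lt_of_forall_prime {S : Finset ℕ} (hS : ∀ p ∈ S, p.Prime) :
    ∑ p ∈ S, Real.log p / (p * ((p : ℝ) ^ 2 - 1)) < 0.186 := by
  rw [← sum_filter_add_sum_filter_not S (· < 100)]
  have hsmall : ∑ p ∈ S.filter (· < 100), Real.log p / (p * ((p : ℝ) ^ 2 - 1)) ≤ 0.18544 := by
    refine (sum_le_sum_of_subset_of_nonneg (fun p hp => ?_) fun p _ _ =>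
      log_div_natCast_mul_sq_sub_one_nonneg p).trans
        sum_primesBelow_hundred_log_div_mul_sq_sub_one_le
    obtain ⟨hpS, hp100⟩ := mem_filter.1 hp
    exact Nat.mem_primesBelow.2 ⟨hp100, hS p hpS⟩
  have hlarge : ∑ p ∈ S.filter (¬ · < 100), Real.log p / (p * ((p : ℝ) ^ 2 - 1)) ≤ 0.046 / 99 :=
    sum_log_div_mul_sq_sub_one_le_of_hundred_le fun p hp => not_lt.1 (mem_filter.1 hp).2
  linarith

theorem sum_log_div_p_mul_sq_sub_one_lt_general (N : ℕ) :
    ∑ p ∈ N.primeFactors, Real.log p / (p * ((p : ℝ) ^ 2 - 1)) < 0.186 :=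
  sum_log_div_mul_sq_sub_one_lt_of_forall_prime fun _ => Nat.prime_of_mem_primeFactors

/-- For every integer `N ≥ 2`, `∑_{p ∣ N} (log p)/(p(p² - 1)) < 0.186`. -/
theorem sum_log_div_p_mul_sq_sub_one_lt (N : ℕ) (hN : 2 ≤ N) :
    ∑ p ∈ N.primeFactors, Real.log p / (p * ((p : ℝ) ^ 2 - 1)) < 0.186 :=
  sum_log_div_p_mul_sq_sub_one_lt_general N

end
end

section
/- For every positive integer N, the cardinality of C_N equals ψ(N); that is, the number of integer matrices [[a,b],[0,d]] with ad = N, a ≥ 1, 0 ≤ b ≤ d−1 and gcd(a,b,d) = 1 is N ∏_{p | N} (1 + 1/p). -/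
open Complex Finset

noncomputable section

/-! For fixed `a` and `d`, the admissible `b` are the residues mod `d` coprime to
`g = gcd(a, d)`, of which there are `(d / g) φ(g)`. Summed over `ad = N` this gives a
multiplicative function of `N`, whose value at `p ^ k` is `1 + (p ^ (k - 1) - 1) + p ^ k`
(from `d = 1`, `1 < d < p ^ k` and `d = p ^ k`), that is `p ^ k (1 + 1 / p)`. -/

open scoped Nat

theorem Nat.card_filter_coprime_range_of_dvd {g d : ℕ} (h : g ∣ d) :
    #{b ∈ range d | g.Coprime b} = d / g * φ g := by
  obtain ⟨m, rfl⟩ := h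
  rcases Nat.eq_zero_or_pos g with rfl | hg
  · simp
  rw [Nat.mul_div_cancel_left _ hg]
  induction m with
  | zero => simp
  | succ m ih =>
    rw [Nat.mul_succ, range_eq_Ico, ← Ico_union_Ico_eq_Ico (Nat.zero_le _) (Nat.le_add_right _ _),
      filter_union, card_union_of_disjoint
        (disjoint_filter_filter (Ico_disjoint_Ico_consecutive _ _ _)),
      ← range_eq_Ico, ih, Nat.filter_coprime_Ico_eq_totient, Nat.succ_mul]

theorem Nat.gcd_mul_mul_of_coprime {a₁ d₁ a₂ d₂ : ℕ} (h : Coprime (a₁ * d₁) (a₂ * d₂)) :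
    (a₁ * a₂).gcd (d₁ * d₂) = a₁.gcd d₁ * a₂.gcd d₂ := by
  have ha : a₁.Coprime a₂ := h.coprime_mul_right.coprime_mul_right_right
  have hd₂ : d₂.Coprime a₁ := h.coprime_mul_right.coprime_mul_left_right.symm
  have hd₁ : d₁.Coprime a₂ := h.coprime_mul_left.coprime_mul_right_right
  rw [Nat.gcd_comm, ha.gcd_mul, hd₂.gcd_mul_right_cancel, hd₁.gcd_mul_left_cancel,
    Nat.gcd_comm d₁, Nat.gcd_comm d₂]

theorem Nat.Coprime.sum_divisors_mul_of_map_mul {R : Type*} [CommSemiring R] {f : ℕ → ℕ → R}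
    (hf : ∀ a₁ d₁ a₂ d₂, Coprime (a₁ * d₁) (a₂ * d₂) → f (a₁ * a₂) (d₁ * d₂) = f a₁ d₁ * f a₂ d₂)
    {m n : ℕ} (hmn : m.Coprime n) :
    ∑ d ∈ (m * n).divisors, f (m * n / d) d =
      (∑ d ∈ m.divisors, f (m / d) d) * ∑ d ∈ n.divisors, f (n / d) d := by
  rw [Nat.divisors_mul, Finset.mul_def, sum_image hmn.mul_injOn_divisors, sum_mul_sum,
    ← sum_product']
  refine sum_congr rfl fun ⟨d₁, d₂⟩ hd => ?_
  obtain ⟨hd₁, hd₂⟩ := mem_product.mp hd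
  have hd₁ : d₁ ∣ m := Nat.dvd_of_mem_divisors hd₁
  have hd₂ : d₂ ∣ n := Nat.dvd_of_mem_divisors hd₂
  rw [← Nat.div_mul_div_comm hd₁ hd₂]
  exact hf _ _ _ _ (by rwa [Nat.div_mul_cancel hd₁, Nat.div_mul_cancel hd₂])

def primitiveResidueCount (a d : ℕ) : ℕ := d / a.gcd d * φ (a.gcd d)

@[simp]
theorem primitiveResidueCount_one_left (d : ℕ) : primitiveResidueCount 1 d = d := by
  simp [primitiveResidueCount]

@[simp]
theorem primitiveResidueCount_one_right (a : ℕ) : primitiveResidueCount a 1 = 1 := by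
  simp [primitiveResidueCount]

theorem card_filter_gcd_gcd_eq_one (a d : ℕ) :
    #{b ∈ range d | a.gcd (b.gcd d) = 1} = primitiveResidueCount a d := by
  have hgcd : ∀ b, a.gcd (b.gcd d) = 1 ↔ (a.gcd d).Coprime b := fun b => by
    rw [Nat.gcd_comm b d, ← Nat.gcd_assoc, Nat.Coprime]
  simp only [hgcd]
  exact Nat.card_filter_coprime_range_of_dvd (Nat.gcd_dvd_right a d)

theorem primitiveResidueCount_mul {a₁ d₁ a₂ d₂ : ℕ} (h : Nat.Coprime (a₁ * d₁) (a₂ * d₂)) :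
    primitiveResidueCount (a₁ * a₂) (d₁ * d₂) =
      primitiveResidueCount a₁ d₁ * primitiveResidueCount a₂ d₂ := by
  have hg : (a₁.gcd d₁).Coprime (a₂.gcd d₂) :=
    Nat.Coprime.of_dvd (dvd_mul_of_dvd_left (Nat.gcd_dvd_left _ _) _)
      (dvd_mul_of_dvd_left (Nat.gcd_dvd_left _ _) _) h
  rw [primitiveResidueCount, Nat.gcd_mul_mul_of_coprime h,
    ← Nat.div_mul_div_comm (Nat.gcd_dvd_right _ _) (Nat.gcd_dvd_right _ _), Nat.totient_mul hg,
    primitiveResidueCount, primitiveResidueCount]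
  ring

theorem primitiveResidueCount_prime_pow {p a b : ℕ} (hp : p.Prime) (ha : a ≠ 0) (hb : b ≠ 0) :
    primitiveResidueCount (p ^ a) (p ^ b) = p ^ (b - 1) * (p - 1) := by
  rw [primitiveResidueCount]
  rcases le_total b a with hba | hab
  · rw [Nat.gcd_eq_right (pow_dvd_pow p hba), Nat.div_self (pow_pos hp.pos b), one_mul,
      Nat.totient_prime_pow hp (Nat.pos_of_ne_zero hb)]
  · rw [Nat.gcd_eq_left (pow_dvd_pow p hab), Nat.pow_div hab hp.pos,
      Nat.totient_prime_pow hp (Nat.pos_of_ne_zero ha), ← mul_assoc, ← pow_add]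
    congr 2
    omega

theorem sum_divisors_prime_pow_primitiveResidueCount {p k : ℕ} (hp : p.Prime) (hk : k ≠ 0) :
    ∑ d ∈ (p ^ k).divisors, primitiveResidueCount (p ^ k / d) d = p ^ k + p ^ (k - 1) := by
  obtain ⟨l, rfl⟩ : ∃ l, k = l + 1 := ⟨k - 1, by omega⟩
  have hmid : ∀ j ∈ range l,
      primitiveResidueCount (p ^ (l + 1) / p ^ (j + 1)) (p ^ (j + 1)) = p ^ j * (p - 1) :=
    fun j hj => by
      have hj : j < l := mem_range.mp hj
      rw [Nat.pow_div (by omega) hp.pos, primitiveResidueCount_prime_pow hp (by omega) (by omega),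
        Nat.add_sub_cancel]
  rw [Nat.sum_divisors_prime_pow hp, sum_range_succ, sum_range_succ', sum_congr rfl hmid,
    ← sum_mul, geom_sum_mul_of_one_le hp.one_lt.le, Nat.div_self (pow_pos hp.pos _), pow_zero,
    primitiveResidueCount_one_left, primitiveResidueCount_one_right, Nat.add_sub_cancel]
  have hpl : 1 ≤ p ^ l := Nat.one_le_pow _ _ hp.pos
  omega

theorem mem_CN_iff {N a b d : ℕ} (hN : N ≠ 0) :
    (a, b, d) ∈ CN N ↔ d ∈ N.divisors ∧ a = N / d ∧ b < d ∧ a.gcd (b.gcd d) = 1 := by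
  simp only [CN, mem_filter, mem_product, mem_range, Nat.mem_divisors]
  constructor
  · rintro ⟨-, had, -, hbd, hg⟩
    exact ⟨⟨Dvd.intro_left a had, hN⟩,
      (Nat.div_eq_of_eq_mul_left (by omega) had.symm).symm, hbd, hg⟩
  · rintro ⟨⟨hdN, -⟩, rfl, hbd, hg⟩
    have hdle : d ≤ N := Nat.le_of_dvd (Nat.pos_of_ne_zero hN) hdN
    exact ⟨⟨Nat.lt_succ_of_le (Nat.div_le_self N d), by omega, by omega⟩, Nat.div_mul_cancel hdN,
      Nat.div_pos hdle (by omega), hbd, hg⟩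

theorem card_CN_eq_sum_divisors {N : ℕ} (hN : N ≠ 0) :
    #(CN N) = ∑ d ∈ N.divisors, primitiveResidueCount (N / d) d := by
  simp_rw [← card_filter_gcd_gcd_eq_one]
  rw [← card_sigma]
  refine card_nbij' (fun g => ⟨g.2.2, g.2.1⟩) (fun x => (N / x.1, x.2, x.1)) ?_ ?_ ?_ ?_
  · rintro ⟨a, b, d⟩ hg
    obtain ⟨hd, rfl, hbd, hg⟩ := (mem_CN_iff hN).mp hg
    simp [hd, hbd, hg]
  · rintro ⟨d, b⟩ hx
    simp only [coe_sigma, Set.mem_sigma_iff, coe_filter, mem_range] at hx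
    exact (mem_CN_iff hN).mpr ⟨hx.1, rfl, hx.2⟩
  · rintro ⟨a, b, d⟩ hg
    obtain ⟨-, rfl, -⟩ := (mem_CN_iff hN).mp hg
    rfl
  · intro x _
    rfl

theorem pow_add_pow_sub_one_eq_mul_one_add_one_div {K : Type*} [Field K] {x : K} {k : ℕ}
    (hx : x ≠ 0) (hk : k ≠ 0) : x ^ k + x ^ (k - 1) = x ^ k * (1 + 1 / x) := by
  obtain ⟨l, rfl⟩ := Nat.exists_eq_succ_of_ne_zero hk
  rw [Nat.succ_sub_one, pow_succ]
  field_simp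

/-- For every positive integer `N`, `#C_N = ψ(N)`. -/
theorem card_CN_eq_psi (N : ℕ) (hN : 1 ≤ N) :
    ((CN N).card : ℝ) = psi N := by
  have hN0 : N ≠ 0 := Nat.one_le_iff_ne_zero.mp hN
  rw [card_CN_eq_sum_divisors hN0,
    Nat.multiplicative_factorization (fun n => ∑ d ∈ n.divisors, primitiveResidueCount (n / d) d)
      (fun m n hmn => hmn.sum_divisors_mul_of_map_mul fun _ _ _ _ => primitiveResidueCount_mul)
      (by simp) hN0,
    Nat.prod_factorization_eq_prod_primeFactors, psi, Nat.cast_prod]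
  have hN_prod : (N : ℝ) = ∏ p ∈ N.primeFactors, (p : ℝ) ^ N.factorization p := by
    exact_mod_cast Nat.prod_primeFactors_pow_factorization hN0
  rw [hN_prod, ← prod_mul_distrib]
  refine prod_congr rfl fun p hp => ?_
  have hk : N.factorization p ≠ 0 := Finsupp.mem_support_iff.mp (by rwa [Nat.support_factorization])
  have hp : p.Prime := Nat.prime_of_mem_primeFactors hp
  rw [sum_divisors_prime_pow_primitiveResidueCount hp hk]
  push_cast
  exact pow_add_pow_sub_one_eq_mul_one_add_one_div (Nat.cast_ne_zero.mpr hp.ne_zero) hk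
end
end

section
/- For every positive integer N and every τ in the complex upper half-plane, −∑_{γ ∈ C_N} log Im(τ_γ) = ψ(N)(log N − 2λ_N − log Im(τ)). -/
/-! Since `Im τ_γ = a² Im τ / N`, the identity amounts to `#C_N = ψ(N)` and
`∑_{γ ∈ C_N} log a = ψ(N) λ_N`. For a fixed divisor `a` of `N` there are `(d/g) φ(g)` admissible
`b`, where `d = N/a` and `g = gcd(a, d)`. This count is multiplicative in the pair `(N, a)`, so
`#C_N` is multiplicative and `(∑ log a) / #C_N` is additive over coprime factorizations, exactly
like `ψ` and `λ`. At `N = p^(m+1)` the counts are `1` for `a = N`, `p^j (p - 1)` for `a = p^(m-j)`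
with `j < m`, and `p^(m+1)` for `a = 1`, and both identities reduce to geometric sums. -/

open Complex Finset

noncomputable section

theorem Function.Periodic.count_mul {p : ℕ → Prop} [DecidablePred p] {a : ℕ}
    (hp : Function.Periodic p a) (k : ℕ) : Nat.count p (a * k) = k * Nat.count p a := by
  induction k with
  | zero => simp
  | succ k ih =>
    have hshift : (fun j => p (a * k + j)) = p := by
      funext j
      rw [add_comm, mul_comm]
      simpa using hp.nat_mul k j
    rw [mul_add_one, Nat.count_add, ih, add_one_mul]
    simp only [hshift]

theorem Nat.card_filter_range_coprime_of_dvd {g d : ℕ} (h : g ∣ d) :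
    #{b ∈ range d | g.Coprime b} = d / g * g.totient := by
  obtain ⟨k, rfl⟩ := h
  rcases g.eq_zero_or_pos with rfl | hg
  · simp
  rw [← Nat.count_eq_card_filter_range, (Nat.periodic_coprime g).count_mul,
    Nat.mul_div_cancel_left k hg, Nat.count_eq_card_filter_range, Nat.totient]

theorem Nat.Coprime.sum_divisors_mul_eq_sum_sum {M : Type*} [AddCommMonoid M] {m n : ℕ}
    (h : m.Coprime n) (f : ℕ → M) :
    ∑ d ∈ (m * n).divisors, f d = ∑ a ∈ m.divisors, ∑ b ∈ n.divisors, f (a * b) := by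
  rw [h.divisors_mul, sum_map, ← sum_product']
  exact sum_attach _ fun x : ℕ × ℕ => f (x.1 * x.2)

theorem sum_range_sub_mul_pow_mul_sub_one {R : Type*} [CommRing R] (x : R) (m : ℕ) :
    ∑ j ∈ range m, ((m : R) - j) * x ^ j * (x - 1) + (m + 1) = ∑ j ∈ range (m + 1), x ^ j := by
  induction m with
  | zero => simp
  | succ m ih =>
    have hsplit : ∑ j ∈ range (m + 1), ((↑(m + 1) : R) - j) * x ^ j * (x - 1)
        = ∑ j ∈ range (m + 1), ((m : R) - j) * x ^ j * (x - 1)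
          + (∑ j ∈ range (m + 1), x ^ j) * (x - 1) := by
      rw [sum_mul, ← sum_add_distrib]
      exact sum_congr rfl fun j _ => by push_cast; ring
    rw [hsplit, geom_sum_mul, sum_range_succ _ m, sum_range_succ _ (m + 1), ← ih]
    push_cast
    ring

theorem psi_mul {m n : ℕ} (h : m.Coprime n) : psi (m * n) = psi m * psi n := by
  simp only [psi, h.primeFactors_mul, prod_union h.disjoint_primeFactors, Nat.cast_mul]
  ring

theorem psi_prime_pow {p m : ℕ} (hp : p.Prime) : psi (p ^ (m + 1)) = p ^ (m + 1) + p ^ m := by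
  have hp0 : (p : ℝ) ≠ 0 := Nat.cast_ne_zero.2 hp.ne_zero
  rw [psi, Nat.primeFactors_prime_pow m.succ_ne_zero hp, prod_singleton]
  field_simp
  push_cast
  ring

theorem lam_mul {m n : ℕ} (h : m.Coprime n) : lam (m * n) = lam m + lam n := by
  have hzero {k l : ℕ} (hkl : k.Coprime l) {p : ℕ} (hp : p ∈ k.primeFactors) :
      l.factorization p = 0 :=
    Nat.factorization_eq_zero_of_not_dvd fun hpl => (Nat.prime_of_mem_primeFactors hp).ne_one
      (Nat.eq_one_of_dvd_coprimes hkl (Nat.dvd_of_mem_primeFactors hp) hpl)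
  rw [lam, lam, lam, h.primeFactors_mul, sum_union h.disjoint_primeFactors,
    Nat.factorization_mul_of_coprime h]
  congr 1 <;> refine sum_congr rfl fun p hp => ?_
  · rw [Finsupp.add_apply, hzero h hp, add_zero]
  · rw [Finsupp.add_apply, hzero h.symm hp, zero_add]

theorem lam_prime_pow {p m : ℕ} (hp : p.Prime) :
    lam (p ^ (m + 1)) =
      ((p : ℝ) ^ (m + 1) - 1) / ((p : ℝ) ^ m * ((p : ℝ) ^ 2 - 1)) * Real.log p := by
  rw [lam, Nat.primeFactors_prime_pow m.succ_ne_zero hp, sum_singleton, hp.factorization_pow,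
    Finsupp.single_eq_same, Nat.add_sub_cancel]

namespace CN

/-- The number of `γ ∈ C_N` with upper-left entry `a`: with `d = N / a`, the entry `b` runs over
the residues mod `d` coprime to `gcd(a, d)`. -/
def fiberCard (N a : ℕ) : ℕ := N / a / Nat.gcd a (N / a) * (Nat.gcd a (N / a)).totient

theorem mem_iff {N : ℕ} (hN : N ≠ 0) {g : ℕ × ℕ × ℕ} :
    g ∈ CN N ↔ g.1 * g.2.2 = N ∧ 1 ≤ g.1 ∧ g.2.1 < g.2.2 ∧
      Nat.gcd g.1 (Nat.gcd g.2.1 g.2.2) = 1 := by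
  refine ⟨fun h => (mem_filter.1 h).2, fun h => mem_filter.2 ⟨?_, h⟩⟩
  obtain ⟨had, -, hbd, -⟩ := h
  have hd : g.2.2 ≤ N := Nat.le_of_dvd (Nat.pos_of_ne_zero hN) (Dvd.intro_left _ had)
  have ha : g.1 ≤ N := Nat.le_of_dvd (Nat.pos_of_ne_zero hN) (Dvd.intro _ had)
  simp only [mem_product, mem_range]
  omega

theorem card_filter_fst {N a : ℕ} (hN : N ≠ 0) (ha : a ∣ N) :
    #{g ∈ CN N | g.1 = a} = fiberCard N a := by
  have ha0 : 0 < a := Nat.pos_of_dvd_of_pos ha (Nat.pos_of_ne_zero hN)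
  rw [fiberCard, ← Nat.card_filter_range_coprime_of_dvd (Nat.gcd_dvd_right a (N / a))]
  have hgcd (b d : ℕ) : Nat.gcd a (Nat.gcd b d) = 1 ↔ (Nat.gcd a d).Coprime b := by
    rw [Nat.gcd_comm b d, ← Nat.gcd_assoc, Nat.Coprime]
  have hfiber {g : ℕ × ℕ × ℕ} : g ∈ CN N ∧ g.1 = a ↔
      g.1 = a ∧ g.2.2 = N / a ∧ g.2.1 < N / a ∧ (Nat.gcd a (N / a)).Coprime g.2.1 := by
    rw [mem_iff hN]
    constructor
    · rintro ⟨⟨had, -, hbd, hg⟩, rfl⟩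
      have hd : g.2.2 = N / g.1 := by rw [← had, Nat.mul_div_cancel_left _ ha0]
      exact ⟨rfl, hd, hd ▸ hbd, hd ▸ (hgcd _ _).1 hg⟩
    · rintro ⟨rfl, hd, hbd, hg⟩
      rw [hd]
      exact ⟨⟨Nat.mul_div_cancel' ha, ha0, hbd, (hgcd _ _).2 hg⟩, rfl⟩
  refine card_nbij' (fun g => g.2.1) (fun b => (a, b, N / a)) ?_ ?_ ?_ ?_
  · intro g hg
    rw [mem_coe, mem_filter, hfiber] at hg
    rw [mem_coe, mem_filter, mem_range]
    exact hg.2.2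
  · intro b hb
    rw [mem_coe, mem_filter, mem_range] at hb
    rw [mem_coe, mem_filter, hfiber]
    exact ⟨rfl, rfl, hb⟩
  · intro g hg
    rw [mem_coe, mem_filter, hfiber] at hg
    exact Prod.ext hg.1.symm (Prod.ext rfl hg.2.1.symm)
  · intro b _
    rfl

theorem sum_fst {M : Type*} [AddCommMonoid M] {N : ℕ} (hN : N ≠ 0) (w : ℕ → M) :
    ∑ g ∈ CN N, w g.1 = ∑ a ∈ N.divisors, fiberCard N a • w a := by
  have hmaps : ∀ g ∈ CN N, g.1 ∈ N.divisors := fun g hg =>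
    Nat.mem_divisors.2 ⟨Dvd.intro _ ((mem_iff hN).1 hg).1, hN⟩
  rw [← sum_fiberwise_of_maps_to hmaps]
  refine sum_congr rfl fun a ha => ?_
  rw [sum_congr rfl fun g hg => by rw [(mem_filter.1 hg).2], sum_const,
    card_filter_fst hN (Nat.dvd_of_mem_divisors ha)]

theorem fiberCard_mul {m n a b : ℕ} (h : m.Coprime n) (ha : a ∣ m) (hb : b ∣ n) :
    fiberCard (m * n) (a * b) = fiberCard m a * fiberCard n b := by
  have hquot : m * n / (a * b) = m / a * (n / b) := (Nat.div_mul_div_comm ha hb).symm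
  have hq : (m / a).Coprime (n / b) :=
    (h.coprime_dvd_left (Nat.div_dvd_of_dvd ha)).coprime_dvd_right (Nat.div_dvd_of_dvd hb)
  have hbm : b.Coprime (m / a) :=
    (h.symm.coprime_dvd_left hb).coprime_dvd_right (Nat.div_dvd_of_dvd ha)
  have han : a.Coprime (n / b) :=
    (h.coprime_dvd_left ha).coprime_dvd_right (Nat.div_dvd_of_dvd hb)
  have hgcd : Nat.gcd (a * b) (m / a * (n / b)) = Nat.gcd a (m / a) * Nat.gcd b (n / b) := by
    rw [Nat.Coprime.gcd_mul _ hq, hbm.gcd_mul_right_cancel, han.gcd_mul_left_cancel]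
  have hg : (Nat.gcd a (m / a)).Coprime (Nat.gcd b (n / b)) :=
    (h.coprime_dvd_left ((Nat.gcd_dvd_left _ _).trans ha)).coprime_dvd_right
      ((Nat.gcd_dvd_left _ _).trans hb)
  rw [fiberCard, fiberCard, fiberCard, hquot, hgcd, Nat.totient_mul hg,
    ← Nat.div_mul_div_comm (Nat.gcd_dvd_right _ _) (Nat.gcd_dvd_right _ _)]
  ring

theorem sum_fst_mul {R : Type*} [CommSemiring R] {m n : ℕ} (h : m.Coprime n) (hm : m ≠ 0)
    (hn : n ≠ 0) (w : ℕ → R) :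
    ∑ g ∈ CN (m * n), w g.1 =
      ∑ a ∈ m.divisors, ∑ b ∈ n.divisors, (fiberCard m a * fiberCard n b : R) * w (a * b) := by
  rw [sum_fst (mul_ne_zero hm hn), h.sum_divisors_mul_eq_sum_sum]
  refine sum_congr rfl fun a ha => sum_congr rfl fun b hb => ?_
  rw [fiberCard_mul h (Nat.dvd_of_mem_divisors ha) (Nat.dvd_of_mem_divisors hb), nsmul_eq_mul,
    Nat.cast_mul]

theorem card_mul {m n : ℕ} (h : m.Coprime n) (hm : m ≠ 0) (hn : n ≠ 0) :
    #(CN (m * n)) = #(CN m) * #(CN n) := by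
  simp only [card_eq_sum_ones]
  rw [sum_fst_mul h hm hn fun _ => 1, sum_fst hm fun _ => 1, sum_fst hn fun _ => 1, sum_mul_sum]
  simp

theorem sum_log_fst_mul {m n : ℕ} (h : m.Coprime n) (hm : m ≠ 0) (hn : n ≠ 0) :
    ∑ g ∈ CN (m * n), Real.log g.1 =
      (∑ g ∈ CN m, Real.log g.1) * #(CN n) + #(CN m) * ∑ g ∈ CN n, Real.log g.1 := by
  simp only [card_eq_sum_ones, Nat.cast_sum, Nat.cast_one]
  rw [sum_fst_mul h hm hn fun a => Real.log a, sum_fst hm fun a => Real.log a,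
    sum_fst hm fun _ => 1, sum_fst hn fun a => Real.log a, sum_fst hn fun _ => 1, sum_mul_sum,
    sum_mul_sum, ← sum_add_distrib]
  refine sum_congr rfl fun a ha => ?_
  rw [← sum_add_distrib]
  refine sum_congr rfl fun b hb => ?_
  rw [Nat.cast_mul, Real.log_mul (Nat.cast_ne_zero.2 ((Nat.pos_of_mem_divisors ha).ne'))
    (Nat.cast_ne_zero.2 ((Nat.pos_of_mem_divisors hb).ne'))]
  simp only [nsmul_eq_mul]
  ring

theorem fiberCard_one (N : ℕ) : fiberCard N 1 = N := by
  simp [fiberCard]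

theorem fiberCard_self {N : ℕ} (hN : N ≠ 0) : fiberCard N N = 1 := by
  simp [fiberCard, Nat.div_self (Nat.pos_of_ne_zero hN)]

theorem fiberCard_prime_pow {p m j : ℕ} (hp : p.Prime) (hj : j < m) :
    fiberCard (p ^ (m + 1)) (p ^ (m - j)) = p ^ j * (p - 1) := by
  have hquot : p ^ (m + 1) / p ^ (m - j) = p ^ (j + 1) := by
    rw [Nat.pow_div (by omega) hp.pos]
    congr 1
    omega
  have hgcd : Nat.gcd (p ^ (m - j)) (p ^ (j + 1)) = p ^ min (m - j) (j + 1) := by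
    rcases le_total (m - j) (j + 1) with h | h
    · rw [min_eq_left h, Nat.gcd_eq_left (Nat.pow_dvd_pow p h)]
    · rw [min_eq_right h, Nat.gcd_eq_right (Nat.pow_dvd_pow p h)]
  rw [fiberCard, hquot, hgcd, Nat.pow_div (min_le_right _ _) hp.pos,
    Nat.totient_prime_pow hp (by omega), ← mul_assoc, ← pow_add]
  congr 2
  omega

theorem sum_fst_prime_pow {M : Type*} [AddCommMonoid M] {p m : ℕ} (hp : p.Prime) (w : ℕ → M) :
    ∑ g ∈ CN (p ^ (m + 1)), w g.1 =
      w (p ^ (m + 1)) + ∑ j ∈ range m, (p ^ j * (p - 1)) • w (p ^ (m - j)) +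
        p ^ (m + 1) • w 1 := by
  rw [sum_fst (pow_ne_zero _ hp.ne_zero), Nat.sum_divisors_prime_pow hp, ← sum_range_reflect,
    sum_range_succ, sum_range_succ']
  have hmid : ∀ j ∈ range m, fiberCard (p ^ (m + 1)) (p ^ (m + 1 + 1 - 1 - (j + 1))) •
      w (p ^ (m + 1 + 1 - 1 - (j + 1))) = (p ^ j * (p - 1)) • w (p ^ (m - j)) := by
    intro j hj
    rw [show m + 1 + 1 - 1 - (j + 1) = m - j by omega, fiberCard_prime_pow hp (mem_range.1 hj)]
  rw [sum_congr rfl hmid]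
  simp [fiberCard_one, fiberCard_self (pow_ne_zero _ hp.ne_zero), add_comm]

theorem card_prime_pow {p m : ℕ} (hp : p.Prime) :
    (#(CN (p ^ (m + 1))) : ℝ) = p ^ (m + 1) + p ^ m := by
  rw [card_eq_sum_ones, sum_fst_prime_pow hp fun _ => 1]
  simp only [smul_eq_mul, mul_one]
  push_cast [Nat.cast_sub hp.one_le]
  rw [← sum_mul, geom_sum_mul]
  ring

theorem sum_log_fst_prime_pow {p m : ℕ} (hp : p.Prime) :
    ∑ g ∈ CN (p ^ (m + 1)), Real.log g.1 = (∑ j ∈ range (m + 1), (p : ℝ) ^ j) * Real.log p := by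
  rw [sum_fst_prime_pow hp fun a => Real.log a,
    ← sum_range_sub_mul_pow_mul_sub_one (p : ℝ) m]
  have hmid : ∀ j ∈ range m, (p ^ j * (p - 1)) • Real.log ↑(p ^ (m - j)) =
      ((m : ℝ) - j) * (p : ℝ) ^ j * (p - 1) * Real.log p := by
    intro j hj
    rw [nsmul_eq_mul, Nat.cast_pow, Real.log_pow, Nat.cast_sub (mem_range.1 hj).le]
    push_cast [Nat.cast_sub hp.one_le]
    ring
  rw [sum_congr rfl hmid, Nat.cast_pow, Real.log_pow]
  simp only [Nat.cast_one, Real.log_one, smul_zero, add_zero, ← sum_mul]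
  push_cast
  ring

theorem card_eq_psi {N : ℕ} (hN : N ≠ 0) : (#(CN N) : ℝ) = psi N := by
  induction N using Nat.recOnPosPrimePosCoprime with
  | prime_pow p n hp hn =>
    obtain ⟨m, rfl⟩ := Nat.exists_eq_add_one_of_ne_zero hn.ne'
    rw [card_prime_pow hp, psi_prime_pow hp]
  | zero => exact absurd rfl hN
  | one =>
    rw [card_eq_sum_ones, sum_fst one_ne_zero fun _ => 1, Nat.divisors_one, sum_singleton,
      fiberCard_self one_ne_zero]
    simp [psi]
  | coprime m n hm hn h ihm ihn =>
    rw [card_mul h (by omega) (by omega), Nat.cast_mul, ihm (by omega), ihn (by omega),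
      psi_mul h]

theorem sum_log_fst_eq_psi_mul_lam {N : ℕ} (hN : N ≠ 0) :
    ∑ g ∈ CN N, Real.log g.1 = psi N * lam N := by
  induction N using Nat.recOnPosPrimePosCoprime with
  | prime_pow p n hp hn =>
    obtain ⟨m, rfl⟩ := Nat.exists_eq_add_one_of_ne_zero hn.ne'
    have hp1 : (1 : ℝ) < p := Nat.one_lt_cast.2 hp.one_lt
    rw [sum_log_fst_prime_pow hp, psi_prime_pow hp, lam_prime_pow hp, geom_sum_eq hp1.ne']
    rw [show (p : ℝ) ^ 2 - 1 = (p - 1) * (p + 1) by ring]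
    field_simp
    ring
  | zero => exact absurd rfl hN
  | one =>
    rw [sum_fst one_ne_zero fun a => Real.log a, Nat.divisors_one, sum_singleton]
    simp [lam]
  | coprime m n hm hn h ihm ihn =>
    rw [sum_log_fst_mul h (by omega) (by omega), ihm (by omega), ihn (by omega),
      card_eq_psi (by omega), card_eq_psi (by omega), psi_mul h, lam_mul h]
    ring

theorem log_im_tauG {N : ℕ} (hN : N ≠ 0) {g : ℕ × ℕ × ℕ} (hg : g ∈ CN N) {z : ℂ}
    (hz : 0 < z.im) :
    Real.log (tauG g z).im = 2 * Real.log g.1 - (Real.log N - Real.log z.im) := by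
  obtain ⟨had, ha1, -, -⟩ := (mem_iff hN).1 hg
  have hd : (g.2.2 : ℝ) ≠ 0 := Nat.cast_ne_zero.2 (right_ne_zero_of_mul (had ▸ hN))
  have ha : (g.1 : ℝ) ≠ 0 := Nat.cast_ne_zero.2 (Nat.one_le_iff_ne_zero.1 ha1)
  have him : (tauG g z).im = g.1 * z.im / g.2.2 := by
    simp [tauG, Complex.div_natCast_im]
  rw [him, Real.log_div (mul_ne_zero ha hz.ne') hd, Real.log_mul ha hz.ne', ← had, Nat.cast_mul,
    Real.log_mul ha hd]
  ring

end CN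

/-- For every positive integer `N` and every `τ` in the upper half-plane,
`-∑_{γ ∈ C_N} log Im(τ_γ) = ψ(N)(log N - 2λ_N - log Im τ)`. -/
theorem neg_sum_log_im_tauG (N : ℕ) (hN : 1 ≤ N) (z : ℂ) (hz : 0 < z.im) :
    -∑ g ∈ CN N, Real.log (tauG g z).im =
      psi N * (Real.log N - 2 * lam N - Real.log z.im) := by
  have hN0 : N ≠ 0 := by omega
  rw [sum_congr rfl fun g hg => CN.log_im_tauG hN0 hg hz, sum_sub_distrib, ← mul_sum, sum_const,
    nsmul_eq_mul, CN.card_eq_psi hN0, CN.sum_log_fst_eq_psi_mul_lam hN0]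
  ring

end
end

section
/- Let N₀ ≥ 3 be a real number, let a and c₀ be real numbers, and define the sequence (c_n)_{n≥0} by c_{n+1} = a + log 6 + log(1 + (log log N₀ + c_n)/log N₀) for n ≥ 0. Assume that 1 + (log log N₀ + c_n)/log N₀ > 0 for all n ≥ 0 and that a + log 6 + (log log N₀)/log N₀ ≥ 0. Then for all n ≥ 0, c_n ≤ c₀/(log N₀)ⁿ + (a + log 6) · (log N₀)/(log N₀ − 1) + (log log N₀)/(log N₀ − 1). -/
open Complex Finset

noncomputable section

theorem Real.one_lt_log_of_three_le {x : ℝ} (hx : 3 ≤ x) : 1 < Real.log x := by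
  rw [Real.lt_log_iff_exp_lt (by linarith)]
  linarith [Real.exp_one_lt_d9]

/-- `d / (1 - r)` is the fixed point of `x ↦ r * x + d`. -/
theorem le_pow_mul_add_div_of_le_mul_add {r d : ℝ} {u : ℕ → ℝ} (hr₀ : 0 ≤ r) (hr₁ : r < 1)
    (hd : 0 ≤ d) (hu : ∀ n, u (n + 1) ≤ r * u n + d) (n : ℕ) :
    u n ≤ r ^ n * u 0 + d / (1 - r) := by
  have hr : 0 < 1 - r := by linarith
  induction n with
  | zero => simpa using div_nonneg hd hr.le
  | succ n ih =>
    calc u (n + 1) ≤ r * u n + d := hu n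
      _ ≤ r * (r ^ n * u 0 + d / (1 - r)) + d := by gcongr
      _ = r ^ (n + 1) * u 0 + d / (1 - r) := by field_simp; ring

/-- Lemma 3 of the paper (abstract form): for the recursively defined sequence `c_n`,
`c_n ≤ c₀/(log N₀)ⁿ + (a + log 6) log N₀/(log N₀ - 1) + log log N₀/(log N₀ - 1)`. -/
theorem c_seq_bound (N₀ a : ℝ) (hN₀ : 3 ≤ N₀) (c : ℕ → ℝ)
    (hcrec : ∀ n : ℕ, c (n + 1) =
      a + Real.log 6 +
        Real.log (1 + (Real.log (Real.log N₀) + c n) / Real.log N₀))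
    (hpos : ∀ n : ℕ, 0 < 1 + (Real.log (Real.log N₀) + c n) / Real.log N₀)
    (hA : 0 ≤ a + Real.log 6 + Real.log (Real.log N₀) / Real.log N₀) :
    ∀ n : ℕ, c n ≤ c 0 / (Real.log N₀) ^ n
      + (a + Real.log 6) * Real.log N₀ / (Real.log N₀ - 1)
      + Real.log (Real.log N₀) / (Real.log N₀ - 1) := by
  intro n
  have hL : 1 < Real.log N₀ := Real.one_lt_log_of_three_le hN₀
  set L := Real.log N₀
  set A := a + Real.log 6
  set M := Real.log L
  -- `log (1 + x) ≤ x` linearises the recursion.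
  have hstep (k : ℕ) : c (k + 1) ≤ L⁻¹ * c k + (A + M / L) := by
    have hlog := Real.log_le_sub_one_of_pos (hpos k)
    rw [hcrec k]
    calc A + Real.log (1 + (M + c k) / L) ≤ A + (M + c k) / L := by linarith
      _ = L⁻¹ * c k + (A + M / L) := by ring
  have hL₀ : L ≠ 0 := by positivity
  have hL₁ : L - 1 ≠ 0 := by linarith
  calc c n ≤ L⁻¹ ^ n * c 0 + (A + M / L) / (1 - L⁻¹) :=
        le_pow_mul_add_div_of_le_mul_add (by positivity) (inv_lt_one_of_one_lt₀ hL) hA hstep n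
    _ = c 0 / L ^ n + A * L / (L - 1) + M / (L - 1) := by rw [inv_pow]; field_simp; ring
end
end
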